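/- arXiv:1309.7441 — 3 statements merged into one kernel-verified Lean document; each statement's English description precedes it below -/
import Mathlib

section
/- There exists exactly one function V ∈ C²(ℝ) such that V > 0 on ℝ, V''(z) + f(V(z)) = 0 for all z ∈ ℝ, V(0) = θ, V'(0) = 0, and V(z) → 0 as z → ±∞. Moreover this V is even, strictly decreasing on [0,∞), and satisfies the first integral V'(z)² = F(V(z)) for all z ∈ ℝ. -/
/-!
Multiplying the equation by `V'` shows that `V'² - F(V)` is constant, so every solution through
`(θ, 0)` satisfies `V'² = F(V)`. As `F < 0` on `(θ, 1]` and `V → 0` at infinity, such a solution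
never exceeds `θ`; on the strip `[0, θ] × ℝ` of the phase plane the system `(V, V')' = (V', -f V)`
is Lipschitz, which gives uniqueness.

For existence, solve `V' = √F(V)` on `z ≤ 0` by quadrature: the time map
`S(v) = ∫_θ^v du / √F(u)` is a strictly increasing bijection `(0, θ] → (-∞, 0]`. It is finite
because `F` has a simple zero at `θ` (`F' = -2f < 0` there), and unbounded because `F` vanishes
quadratically at `0` (`f(0) = 0`). The inverse of `S`, extended evenly, is the solution; its
second derivative is `-f(V)` by the chain rule away from `0`, and at `0` by continuity.
-/

open Set Filter MeasureTheory

noncomputable def Fint (f : ℝ → ℝ) (u : ℝ) : ℝ := -2 * ∫ s in (0:ℝ)..u, f s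

structure CondF (f : ℝ → ℝ) (α θ lam : ℝ) : Prop where
  smooth : ContDiff ℝ 1 f
  f_zero : f 0 = 0
  df_zero : deriv f 0 < 0
  lam_def : lam = Real.sqrt (-(deriv f 0))
  alpha_pos : 0 < α
  alpha_lt : α < 1
  neg_low : ∀ s ∈ Set.Ioo (0:ℝ) α, f s < 0
  pos_mid : ∀ s ∈ Set.Ioo α (1:ℝ), 0 < f s
  neg_high : ∀ s ∈ Set.Ioi (1:ℝ), f s < 0
  df_bdd : BddBelow (deriv f '' Set.Ioi (1:ℝ))
  theta_gt : α < θ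
  theta_lt : θ < 1
  F_theta : Fint f θ = 0

open Topology Function

section Potential

variable {f : ℝ → ℝ}

@[simp] theorem Fint_zero : Fint f 0 = 0 := by simp [Fint]

theorem hasDerivAt_Fint (hf : Continuous f) (u : ℝ) : HasDerivAt (Fint f) (-2 * f u) u :=
  (hf.integral_hasStrictDerivAt 0 u).hasDerivAt.const_mul (-2)

theorem continuous_Fint (hf : Continuous f) : Continuous (Fint f) :=
  continuous_iff_continuousAt.2 fun u => (hasDerivAt_Fint hf u).continuousAt

theorem exists_Fint_le_mul_sq (hf : ContDiff ℝ 1 f) (hf0 : f 0 = 0) (a : ℝ) :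
    ∃ C > 0, ∀ u ∈ Icc 0 a, Fint f u ≤ C * u ^ 2 := by
  obtain ⟨K, hK⟩ := (isCompact_Icc (a := 0) (b := a)).exists_bound_of_continuousOn
    (hf.continuous_deriv le_rfl).continuousOn
  have hlin : ∀ s ∈ Icc 0 a, -(K * s) ≤ f s := by
    intro s hs
    have := Convex.norm_image_sub_le_of_norm_deriv_le
      (fun x _ => hf.differentiable one_ne_zero x) hK (convex_Icc 0 a) ⟨le_rfl, hs.1.trans hs.2⟩ hs
    rw [hf0, sub_zero, sub_zero, Real.norm_eq_abs, Real.norm_eq_abs, abs_of_nonneg hs.1] at this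
    exact neg_le_of_abs_le this
  refine ⟨|K| + 1, by positivity, fun u hu => ?_⟩
  have hint : ∫ s in (0:ℝ)..u, -(K * s) ≤ ∫ s in (0:ℝ)..u, f s :=
    intervalIntegral.integral_mono_on hu.1
      ((by fun_prop : Continuous fun s : ℝ => -(K * s)).intervalIntegrable 0 u)
      (hf.continuous.intervalIntegrable 0 u) fun s hs => hlin s ⟨hs.1, hs.2.trans hu.2⟩
  rw [intervalIntegral.integral_neg, intervalIntegral.integral_const_mul, integral_id] at hint
  have : K * u ^ 2 ≤ (|K| + 1) * u ^ 2 := by gcongr; linarith [le_abs_self K]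
  simp only [Fint]
  nlinarith

theorem HasDerivAt.eventually_nhdsLT_add_mul_sub_lt {F : ℝ → ℝ} {F' x c : ℝ}
    (hF : HasDerivAt F F' x) (hc : F' < c) : ∀ᶠ u in 𝓝[<] x, F x + c * (u - x) < F u := by
  filter_upwards [hF.hasDerivWithinAt.limsup_slope_le' (lt_irrefl x) hc, self_mem_nhdsWithin]
    with u hslope hu
  rw [slope_def_field, div_lt_iff_of_neg (sub_neg.2 hu)] at hslope
  linarith

end Potential

namespace CondF

variable {f : ℝ → ℝ} {α θ lam : ℝ}

theorem theta_pos (hf : CondF f α θ lam) : 0 < θ := hf.alpha_pos.trans hf.theta_gt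

theorem strictMonoOn_Fint (hf : CondF f α θ lam) : StrictMonoOn (Fint f) (Icc 0 α) :=
  strictMonoOn_of_deriv_pos (convex_Icc 0 α) (continuous_Fint hf.smooth.continuous).continuousOn
    fun x hx => by
      rw [interior_Icc] at hx
      rw [(hasDerivAt_Fint hf.smooth.continuous x).deriv]
      linarith [hf.neg_low x hx]

theorem strictAntiOn_Fint (hf : CondF f α θ lam) : StrictAntiOn (Fint f) (Icc α 1) :=
  strictAntiOn_of_deriv_neg (convex_Icc α 1) (continuous_Fint hf.smooth.continuous).continuousOn
    fun x hx => by
      rw [interior_Icc] at hx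
      rw [(hasDerivAt_Fint hf.smooth.continuous x).deriv]
      linarith [hf.pos_mid x hx]

theorem Fint_pos (hf : CondF f α θ lam) : ∀ u ∈ Ioo 0 θ, 0 < Fint f u := by
  intro u hu
  rcases le_or_gt u α with h | h
  · simpa using hf.strictMonoOn_Fint ⟨le_rfl, hf.alpha_pos.le⟩ ⟨hu.1.le, h⟩ hu.1
  · simpa [hf.F_theta] using hf.strictAntiOn_Fint ⟨h.le, (hu.2.trans hf.theta_lt).le⟩
      ⟨hf.theta_gt.le, hf.theta_lt.le⟩ hu.2

theorem Fint_neg (hf : CondF f α θ lam) {u : ℝ} (hu : u ∈ Ioc θ 1) : Fint f u < 0 := by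
  simpa [hf.F_theta] using hf.strictAntiOn_Fint ⟨hf.theta_gt.le, hf.theta_lt.le⟩
    ⟨(hf.theta_gt.trans hu.1).le, hu.2⟩ hu.1

theorem eventually_mul_sub_le_Fint (hf : CondF f α θ lam) :
    ∀ᶠ u in 𝓝[<] θ, f θ * (θ - u) ≤ Fint f u := by
  have hfθ : 0 < f θ := hf.pos_mid θ ⟨hf.theta_gt, hf.theta_lt⟩
  filter_upwards [(hasDerivAt_Fint hf.smooth.continuous θ).eventually_nhdsLT_add_mul_sub_lt
    (by linarith : -2 * f θ < -f θ)] with u hu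
  rw [hf.F_theta] at hu
  linarith

end CondF

structure IsGroundState (f : ℝ → ℝ) (θ : ℝ) (W : ℝ → ℝ) : Prop where
  contDiff : ContDiff ℝ 2 W
  pos : ∀ z, 0 < W z
  ode : ∀ z, deriv (deriv W) z + f (W z) = 0
  apply_zero : W 0 = θ
  deriv_zero : deriv W 0 = 0
  tendsto_atTop : Tendsto W atTop (𝓝 0)
  tendsto_atBot : Tendsto W atBot (𝓝 0)

theorem isGroundState_iff {f : ℝ → ℝ} {θ : ℝ} {W : ℝ → ℝ} :
    IsGroundState f θ W ↔
      ContDiff ℝ 2 W ∧ (∀ z, 0 < W z) ∧ (∀ z, deriv (deriv W) z + f (W z) = 0) ∧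
        W 0 = θ ∧ deriv W 0 = 0 ∧ Tendsto W atTop (𝓝 0) ∧ Tendsto W atBot (𝓝 0) :=
  ⟨fun ⟨h₁, h₂, h₃, h₄, h₅, h₆, h₇⟩ => ⟨h₁, h₂, h₃, h₄, h₅, h₆, h₇⟩,
    fun ⟨h₁, h₂, h₃, h₄, h₅, h₆, h₇⟩ => ⟨h₁, h₂, h₃, h₄, h₅, h₆, h₇⟩⟩

theorem ContDiff.hasDerivAt_deriv {W : ℝ → ℝ} (hW : ContDiff ℝ 2 W) (z : ℝ) :
    HasDerivAt (deriv W) (deriv (deriv W) z) z :=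
  ((hW.iterate_deriv' 1 1).differentiable one_ne_zero z).hasDerivAt

theorem sq_deriv_sub_Fint_eq {f W : ℝ → ℝ} (hf : Continuous f) (hW : ContDiff ℝ 2 W)
    (hode : ∀ z, deriv (deriv W) z + f (W z) = 0) (z : ℝ) :
    deriv W z ^ 2 - Fint f (W z) = deriv W 0 ^ 2 - Fint f (W 0) := by
  have hE : ∀ y, HasDerivAt (fun y => deriv W y ^ 2 - Fint f (W y)) 0 y := by
    intro y
    have hW' := (hW.differentiable (by norm_num) y).hasDerivAt
    refine (((hW.hasDerivAt_deriv y).fun_pow 2).fun_sub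
      ((hasDerivAt_Fint hf (W y)).comp y hW')).congr_deriv ?_
    push_cast
    linear_combination (2 * deriv W y) * hode y
  exact is_const_of_deriv_eq_zero (fun y => (hE y).differentiableAt) (fun y => (hE y).deriv) z 0

namespace IsGroundState

variable {f : ℝ → ℝ} {α θ lam : ℝ} {W : ℝ → ℝ}

theorem sq_deriv_eq (hf : CondF f α θ lam) (hW : IsGroundState f θ W) (z : ℝ) :
    deriv W z ^ 2 = Fint f (W z) := by
  have := sq_deriv_sub_Fint_eq hf.smooth.continuous hW.contDiff hW.ode z
  rw [hW.apply_zero, hW.deriv_zero, hf.F_theta] at this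
  linear_combination this

theorem le_theta (hf : CondF f α θ lam) (hW : IsGroundState f θ W) (z : ℝ) : W z ≤ θ := by
  by_contra! hz
  obtain ⟨z₁, hz₁⟩ := (hW.tendsto_atTop.eventually_lt_const hf.theta_pos).exists
  obtain ⟨t, htθ, ht⟩ := exists_between (lt_min hz hf.theta_lt)
  obtain ⟨z₂, -, hz₂⟩ := intermediate_value_uIcc (a := z₁) (b := z)
    hW.contDiff.continuous.continuousOn
    (show t ∈ uIcc (W z₁) (W z) from
      Icc_subset_uIcc ⟨by linarith, (ht.trans_le (min_le_left _ _)).le⟩)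
  have := hW.sq_deriv_eq hf z₂
  rw [hz₂] at this
  nlinarith [hf.Fint_neg ⟨htθ, (ht.trans_le (min_le_right _ _)).le⟩]

theorem hasDerivAt_phase (hW : IsGroundState f θ W) (z : ℝ) :
    HasDerivAt (fun z => (W z, deriv W z)) (deriv W z, -f (W z)) z := by
  rw [← eq_neg_of_add_eq_zero_left (hW.ode z)]
  exact (hW.contDiff.differentiable two_ne_zero z).hasDerivAt.prodMk
    (hW.contDiff.hasDerivAt_deriv z)

/-- Both solutions stay in the strip `[0, θ] × ℝ` of the phase plane, on which the vector field
`(w, w') ↦ (w', -f w)` is Lipschitz. -/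
theorem unique (hf : CondF f α θ lam) {W₁ W₂ : ℝ → ℝ} (h₁ : IsGroundState f θ W₁)
    (h₂ : IsGroundState f θ W₂) : W₁ = W₂ := by
  set s : Set (ℝ × ℝ) := Icc 0 θ ×ˢ univ
  obtain ⟨K, hK⟩ := hf.smooth.locallyLipschitz.locallyLipschitzOn.exists_lipschitzOnWith_of_compact
    (isCompact_Icc (a := 0) (b := θ))
  have hfst : LipschitzOnWith K (fun p : ℝ × ℝ => f p.1) s := by
    have := hK.comp (LipschitzWith.prod_fst.lipschitzOnWith (s := s)) fun p hp => hp.1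
    rwa [mul_one] at this
  have hlip : LipschitzOnWith (max 1 K) (fun p : ℝ × ℝ => (p.2, -f p.1)) s :=
    LipschitzWith.prod_snd.lipschitzOnWith.prodMk hfst.neg
  have hsol : ∀ W, IsGroundState f θ W → ∀ t,
      HasDerivAt (fun z => (W z, deriv W z)) (deriv W t, -f (W t)) t ∧ (W t, deriv W t) ∈ s :=
    fun W hW t => ⟨hW.hasDerivAt_phase t, ⟨(hW.pos t).le, hW.le_theta hf t⟩, trivial⟩
  have := ODE_solution_unique_univ (v := fun _ p => (p.2, -f p.1)) (s := fun _ => s) (t₀ := 0)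
    (fun _ => hlip) (hsol W₁ h₁) (hsol W₂ h₂)
    (by simp [h₁.apply_zero, h₂.apply_zero, h₁.deriv_zero, h₂.deriv_zero])
  funext z
  exact congrArg Prod.fst (congrFun this z)

end IsGroundState

noncomputable def timeMap (G : ℝ → ℝ) (θ v : ℝ) : ℝ := ∫ u in θ..v, (√(G u))⁻¹

section TimeMap

variable {G : ℝ → ℝ} {θ : ℝ}

theorem continuousOn_inv_sqrt (hG : Continuous G) (hpos : ∀ u ∈ Ioo 0 θ, 0 < G u) :
    ContinuousOn (fun u => (√(G u))⁻¹) (Ioo 0 θ) :=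
  (Real.continuous_sqrt.comp hG).continuousOn.inv₀ fun u hu => (Real.sqrt_pos.2 (hpos u hu)).ne'

theorem intervalIntegrable_inv_sqrt (hG : Continuous G) (hpos : ∀ u ∈ Ioo 0 θ, 0 < G u)
    {c : ℝ} (hc : 0 < c) (hlow : ∀ᶠ u in 𝓝[<] θ, c * (θ - u) ≤ G u) {v : ℝ} (hv : v ∈ Ioc 0 θ) :
    IntervalIntegrable (fun u => (√(G u))⁻¹) volume θ v := by
  rcases hv.2.eq_or_lt with rfl | hvθ
  · exact IntervalIntegrable.refl
  obtain ⟨w₀, hw₀θ, hw₀⟩ := mem_nhdsLT_iff_exists_Ioo_subset.1 hlow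
  have hwθ : max v w₀ < θ := max_lt hvθ hw₀θ
  refine (IntervalIntegrable.trans (b := max v w₀) ?_ ?_).symm
  · refine ContinuousOn.intervalIntegrable ((continuousOn_inv_sqrt hG hpos).mono ?_)
    rw [uIcc_of_le (le_max_left _ _)]
    exact Icc_subset_Ioo hv.1 hwθ
  rw [intervalIntegrable_iff_integrableOn_Ioo_of_le hwθ.le]
  have hdom : IntegrableOn (fun u => (√c)⁻¹ * (θ - u) ^ (-(1 / 2) : ℝ)) (Ioo (max v w₀) θ) := by
    rw [← intervalIntegrable_iff_integrableOn_Ioo_of_le hwθ.le]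
    simpa using ((intervalIntegral.intervalIntegrable_rpow' (r := -(1 / 2)) (by norm_num))
      |>.comp_sub_left θ (a := θ - max v w₀) (b := 0)).const_mul (√c)⁻¹
  have hmeas : ContinuousOn (fun u => (√(G u))⁻¹) (Ioo (max v w₀) θ) :=
    (continuousOn_inv_sqrt hG hpos).mono (Ioo_subset_Ioo_left (hv.1.trans_le (le_max_left _ _)).le)
  refine hdom.mono' (hmeas.aestronglyMeasurable measurableSet_Ioo)
    (ae_restrict_of_forall_mem measurableSet_Ioo fun u hu => ?_)
  have hθu : 0 < θ - u := sub_pos.2 hu.2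
  have hGu : c * (θ - u) ≤ G u := hw₀ ⟨(le_max_right _ _).trans_lt hu.1, hu.2⟩
  rw [Real.norm_of_nonneg (by positivity), Real.rpow_neg hθu.le, ← Real.sqrt_eq_rpow, ← mul_inv,
    ← Real.sqrt_mul hc.le]
  exact inv_anti₀ (by positivity) (Real.sqrt_le_sqrt hGu)

theorem timeMap_self : timeMap G θ θ = 0 := intervalIntegral.integral_same

theorem timeMap_add_integral
    (hint : ∀ v ∈ Ioc 0 θ, IntervalIntegrable (fun u => (√(G u))⁻¹) volume θ v)
    {v₁ v₂ : ℝ} (hv₁ : v₁ ∈ Ioc 0 θ) (hv₂ : v₂ ∈ Ioc 0 θ) :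
    timeMap G θ v₁ + ∫ u in v₁..v₂, (√(G u))⁻¹ = timeMap G θ v₂ :=
  intervalIntegral.integral_add_adjacent_intervals (hint v₁ hv₁)
    ((hint v₁ hv₁).symm.trans (hint v₂ hv₂))

theorem strictMonoOn_timeMap (hpos : ∀ u ∈ Ioo 0 θ, 0 < G u)
    (hint : ∀ v ∈ Ioc 0 θ, IntervalIntegrable (fun u => (√(G u))⁻¹) volume θ v) :
    StrictMonoOn (timeMap G θ) (Ioc 0 θ) := by
  intro v₁ hv₁ v₂ hv₂ hlt
  rw [← timeMap_add_integral hint hv₁ hv₂, lt_add_iff_pos_right]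
  exact intervalIntegral.intervalIntegral_pos_of_pos_on ((hint v₁ hv₁).symm.trans (hint v₂ hv₂))
    (fun u hu => inv_pos.2 (Real.sqrt_pos.2 (hpos u ⟨hv₁.1.trans hu.1, hu.2.trans_le hv₂.2⟩))) hlt

theorem continuousOn_timeMap
    (hint : ∀ v ∈ Ioc 0 θ, IntervalIntegrable (fun u => (√(G u))⁻¹) volume θ v)
    {v : ℝ} (hv : v ∈ Ioc 0 θ) : ContinuousOn (timeMap G θ) (Icc v θ) := by
  have := intervalIntegral.continuousOn_primitive_interval' (hint v hv).symm right_mem_uIcc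
  rwa [uIcc_of_le hv.2] at this

theorem hasDerivAt_timeMap (hG : Continuous G) (hpos : ∀ u ∈ Ioo 0 θ, 0 < G u)
    (hint : ∀ v ∈ Ioc 0 θ, IntervalIntegrable (fun u => (√(G u))⁻¹) volume θ v)
    {v : ℝ} (hv : v ∈ Ioo 0 θ) : HasDerivAt (timeMap G θ) (√(G v))⁻¹ v :=
  intervalIntegral.integral_hasDerivAt_right (hint v (Ioo_subset_Ioc_self hv))
    ((continuousOn_inv_sqrt hG hpos).stronglyMeasurableAtFilter isOpen_Ioo v hv)
    ((continuousOn_inv_sqrt hG hpos).continuousAt (isOpen_Ioo.mem_nhds hv))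

theorem tendsto_timeMap_nhdsGT_zero (hpos : ∀ u ∈ Ioo 0 θ, 0 < G u)
    (hint : ∀ v ∈ Ioc 0 θ, IntervalIntegrable (fun u => (√(G u))⁻¹) volume θ v)
    {a C : ℝ} (ha : a ∈ Ioo 0 θ) (hC : 0 < C) (hup : ∀ u ∈ Ioc 0 a, G u ≤ C * u ^ 2) :
    Tendsto (timeMap G θ) (𝓝[>] 0) atBot := by
  have hlog : Tendsto (fun v => timeMap G θ a + -((√C)⁻¹ * (Real.log a + -Real.log v)))
      (𝓝[>] 0) atBot :=
    tendsto_atBot_add_const_left _ _ <| tendsto_neg_atTop_atBot.comp <|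
      (tendsto_atTop_add_const_left _ _ <| tendsto_neg_atBot_atTop.comp
        Real.tendsto_log_nhdsGT_zero).const_mul_atTop (by positivity)
  refine tendsto_atBot_mono' _ ?_ hlog
  filter_upwards [Ioo_mem_nhdsGT ha.1] with v hv
  have hva : v ∈ Ioc 0 θ := ⟨hv.1, (hv.2.trans ha.2).le⟩
  have hcmp : (√C)⁻¹ * (Real.log a + -Real.log v) ≤ ∫ u in v..a, (√(G u))⁻¹ := by
    rw [← sub_eq_add_neg, ← Real.log_div ha.1.ne' hv.1.ne',
      ← integral_inv (notMem_uIcc_of_lt hv.1 ha.1), ← intervalIntegral.integral_const_mul]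
    refine intervalIntegral.integral_mono_on hv.2.le ?_
      ((hint v hva).symm.trans (hint a (Ioo_subset_Ioc_self ha))) fun u hu => ?_
    · refine ContinuousOn.intervalIntegrable (continuousOn_const.mul (continuousOn_inv₀.mono ?_))
      rw [uIcc_of_le hv.2.le]
      exact fun u hu => (hv.1.trans_le hu.1).ne'
    have hu0 : 0 < u := hv.1.trans_le hu.1
    calc (√C)⁻¹ * u⁻¹ = (√(C * u ^ 2))⁻¹ := by
          rw [Real.sqrt_mul hC.le, Real.sqrt_sq hu0.le, mul_inv]
      _ ≤ (√(G u))⁻¹ := inv_anti₀ (Real.sqrt_pos.2 (hpos u ⟨hu0, hu.2.trans_lt ha.2⟩))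
          (Real.sqrt_le_sqrt (hup u ⟨hu0, hu.2⟩))
  rw [← timeMap_add_integral hint hva (Ioo_subset_Ioc_self ha)]
  linarith

theorem surjOn_timeMap
    (hint : ∀ v ∈ Ioc 0 θ, IntervalIntegrable (fun u => (√(G u))⁻¹) volume θ v)
    (hθ : 0 < θ) (hdiv : Tendsto (timeMap G θ) (𝓝[>] 0) atBot) :
    SurjOn (timeMap G θ) (Ioc 0 θ) (Iic 0) := by
  intro z hz
  obtain ⟨v, hvz, hv⟩ := ((hdiv.eventually_le_atBot z).and (Ioc_mem_nhdsGT hθ)).exists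
  obtain ⟨w, hw, rfl⟩ :=
    intermediate_value_Icc hv.2 (continuousOn_timeMap hint hv) ⟨hvz, timeMap_self (G := G) ▸ hz⟩
  exact ⟨w, ⟨hv.1.trans_le hw.1, hw.2⟩, rfl⟩

end TimeMap

theorem StrictMonoOn.strictMonoOn_invFunOn {α β : Type*} [LinearOrder α] [Nonempty α]
    [LinearOrder β] {T : α → β} {s : Set α} {t : Set β} (hT : StrictMonoOn T s)
    (hsurj : SurjOn T s t) : StrictMonoOn (invFunOn T s) t := fun z₁ h₁ z₂ h₂ hlt => by
  rwa [← hT.lt_iff_lt (hsurj.mapsTo_invFunOn h₁) (hsurj.mapsTo_invFunOn h₂),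
    hsurj.rightInvOn_invFunOn h₁, hsurj.rightInvOn_invFunOn h₂]

section Inverse

variable {T : ℝ → ℝ} {θ : ℝ}

theorem invFunOn_zero_eq (hT : StrictMonoOn T (Ioc 0 θ)) (hθ : 0 < θ) (hTθ : T θ = 0) :
    invFunOn T (Ioc 0 θ) 0 = θ :=
  hTθ ▸ hT.injOn.leftInvOn_invFunOn ⟨hθ, le_rfl⟩

theorem image_invFunOn_Iic (hT : StrictMonoOn T (Ioc 0 θ)) (hsurj : SurjOn T (Ioc 0 θ) (Iic 0))
    (hθ : 0 < θ) (hTθ : T θ = 0) : invFunOn T (Ioc 0 θ) '' Iic 0 = Ioc 0 θ := by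
  have hmaps : MapsTo T (Ioc 0 θ) (Iic 0) := fun v hv =>
    hTθ ▸ hT.monotoneOn hv ⟨hθ, le_rfl⟩ hv.2
  rw [← hsurj.image_eq_of_mapsTo hmaps]
  exact hT.injOn.invFunOn_image subset_rfl

theorem invFunOn_mem_Ioo (hT : StrictMonoOn T (Ioc 0 θ)) (hsurj : SurjOn T (Ioc 0 θ) (Iic 0))
    (hθ : 0 < θ) (hTθ : T θ = 0) {z : ℝ} (hz : z < 0) : invFunOn T (Ioc 0 θ) z ∈ Ioo 0 θ := by
  refine ⟨(hsurj.mapsTo_invFunOn hz.le).1, ?_⟩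
  simpa [invFunOn_zero_eq hT hθ hTθ] using hT.strictMonoOn_invFunOn hsurj hz.le self_mem_Iic hz

theorem continuousAt_invFunOn (hT : StrictMonoOn T (Ioc 0 θ)) (hsurj : SurjOn T (Ioc 0 θ) (Iic 0))
    (hθ : 0 < θ) (hTθ : T θ = 0) {z : ℝ} (hz : z < 0) : ContinuousAt (invFunOn T (Ioc 0 θ)) z := by
  have hmono := hT.strictMonoOn_invFunOn hsurj
  refine continuousAt_of_monotoneOn_of_image_mem_nhds hmono.monotoneOn (Iic_mem_nhds hz) ?_
  rw [image_invFunOn_Iic hT hsurj hθ hTθ]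
  have hmem := invFunOn_mem_Ioo hT hsurj hθ hTθ hz
  exact Ioc_mem_nhds hmem.1 hmem.2

theorem continuousWithinAt_invFunOn_zero (hT : StrictMonoOn T (Ioc 0 θ))
    (hsurj : SurjOn T (Ioc 0 θ) (Iic 0)) (hθ : 0 < θ) (hTθ : T θ = 0) :
    ContinuousWithinAt (invFunOn T (Ioc 0 θ)) (Iic 0) 0 := by
  refine (hT.strictMonoOn_invFunOn hsurj).continuousWithinAt_left_of_image_mem_nhdsWithin
    self_mem_nhdsWithin ?_
  rw [image_invFunOn_Iic hT hsurj hθ hTθ, invFunOn_zero_eq hT hθ hTθ]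
  exact Ioc_mem_nhdsLE hθ

theorem tendsto_invFunOn_atBot (hT : StrictMonoOn T (Ioc 0 θ)) (hsurj : SurjOn T (Ioc 0 θ) (Iic 0))
    (hθ : 0 < θ) (hTθ : T θ = 0) : Tendsto (invFunOn T (Ioc 0 θ)) atBot (𝓝 0) := by
  have hmaps : MapsTo T (Ioc 0 θ) (Iic 0) := fun v hv =>
    hTθ ▸ hT.monotoneOn hv ⟨hθ, le_rfl⟩ hv.2
  refine tendsto_order.2 ⟨fun a ha => ?_, fun ε hε => ?_⟩
  · filter_upwards [eventually_le_atBot 0] with z hz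
    exact ha.trans (hsurj.mapsTo_invFunOn hz).1
  · set v := min (ε / 2) θ
    have hv : v ∈ Ioc 0 θ := ⟨lt_min (half_pos hε) hθ, min_le_right _ _⟩
    filter_upwards [eventually_le_atBot (T v)] with z hz
    have := (hT.strictMonoOn_invFunOn hsurj).monotoneOn (hz.trans (hmaps hv)) (hmaps hv) hz
    rw [hT.injOn.leftInvOn_invFunOn hv] at this
    linarith [min_le_left (ε / 2) θ]

end Inverse

theorem contDiff_two_of_hasDerivAt {u u' u'' : ℝ → ℝ} (h₁ : ∀ z, HasDerivAt u (u' z) z)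
    (h₂ : ∀ z, HasDerivAt u' (u'' z) z) (h₃ : Continuous u'') : ContDiff ℝ 2 u := by
  have hu' : deriv u = u' := funext fun z => (h₁ z).deriv
  have hu'' : deriv u' = u'' := funext fun z => (h₂ z).deriv
  rw [show (2 : WithTop ℕ∞) = 1 + 1 from rfl, contDiff_succ_iff_deriv, hu',
    contDiff_one_iff_deriv, hu'']
  exact ⟨fun z => (h₁ z).differentiableAt, by simp, fun z => (h₂ z).differentiableAt, h₃⟩

theorem hasDerivAt_of_hasDerivAt_of_neg {u u' : ℝ → ℝ} {ε : ℝ} (hu : ∀ z, u (-z) = ε * u z)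
    (hu' : ∀ z, u' (-z) = -(ε * u' z)) (hneg : ∀ z < 0, HasDerivAt u (u' z) z)
    (hu₀ : ContinuousAt u 0) (hu'₀ : ContinuousAt u' 0) (z : ℝ) : HasDerivAt u (u' z) z := by
  have hne : ∀ z ≠ 0, HasDerivAt u (u' z) z := by
    intro z hz
    rcases hz.lt_or_gt with hz | hz
    · exact hneg z hz
    have h := ((hneg (-z) (neg_lt_zero.2 hz)).comp z (hasDerivAt_neg z)).const_mul ε
    have hfun : (fun y => ε * (u ∘ Neg.neg) y) = u :=
      funext fun y => by rw [comp_apply, ← hu (-y), neg_neg]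
    rw [hfun] at h
    have hu'z := hu' (-z)
    rw [neg_neg] at hu'z
    exact h.congr_deriv (by rw [hu'z]; ring)
  rcases eq_or_ne z 0 with rfl | hz
  · exact hasDerivAt_of_hasDerivAt_of_ne hne hu₀ hu'₀
  · exact hne z hz

namespace CondF

variable {f : ℝ → ℝ} {α θ lam : ℝ}

theorem intervalIntegrable_inv_sqrt_Fint (hf : CondF f α θ lam) :
    ∀ v ∈ Ioc 0 θ, IntervalIntegrable (fun u => (√(Fint f u))⁻¹) volume θ v := fun _ hv =>
  intervalIntegrable_inv_sqrt (continuous_Fint hf.smooth.continuous) hf.Fint_pos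
    (hf.pos_mid θ ⟨hf.theta_gt, hf.theta_lt⟩) hf.eventually_mul_sub_le_Fint hv

theorem strictMonoOn_timeMap (hf : CondF f α θ lam) : StrictMonoOn (timeMap (Fint f) θ) (Ioc 0 θ) :=
  _root_.strictMonoOn_timeMap hf.Fint_pos hf.intervalIntegrable_inv_sqrt_Fint

theorem surjOn_timeMap (hf : CondF f α θ lam) : SurjOn (timeMap (Fint f) θ) (Ioc 0 θ) (Iic 0) := by
  obtain ⟨C, hC, hup⟩ := exists_Fint_le_mul_sq hf.smooth hf.f_zero α
  exact _root_.surjOn_timeMap hf.intervalIntegrable_inv_sqrt_Fint hf.theta_pos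
    (tendsto_timeMap_nhdsGT_zero hf.Fint_pos hf.intervalIntegrable_inv_sqrt_Fint
      ⟨hf.alpha_pos, hf.theta_gt⟩ hC fun u hu => hup u (Ioc_subset_Icc_self hu))

end CondF

noncomputable def risingBranch (f : ℝ → ℝ) (θ : ℝ) : ℝ → ℝ :=
  invFunOn (timeMap (Fint f) θ) (Ioc 0 θ)

noncomputable def groundState (f : ℝ → ℝ) (θ z : ℝ) : ℝ := risingBranch f θ (-|z|)

theorem groundState_neg {f : ℝ → ℝ} {θ : ℝ} (z : ℝ) : groundState f θ (-z) = groundState f θ z := by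
  simp [groundState]

theorem groundState_eventuallyEq_risingBranch {f : ℝ → ℝ} {θ z : ℝ} (hz : z < 0) :
    groundState f θ =ᶠ[𝓝 z] risingBranch f θ := by
  filter_upwards [Iio_mem_nhds hz] with y hy
  simp [groundState, abs_of_neg (mem_Iio.1 hy)]

namespace CondF

variable {f : ℝ → ℝ} {α θ lam : ℝ}

theorem risingBranch_mem_Ioo (hf : CondF f α θ lam) {z : ℝ} (hz : z < 0) :
    risingBranch f θ z ∈ Ioo 0 θ :=
  invFunOn_mem_Ioo hf.strictMonoOn_timeMap hf.surjOn_timeMap hf.theta_pos timeMap_self hz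

theorem hasDerivAt_risingBranch (hf : CondF f α θ lam) {z : ℝ} (hz : z < 0) :
    HasDerivAt (risingBranch f θ) (√(Fint f (risingBranch f θ z))) z := by
  have hmem := hf.risingBranch_mem_Ioo hz
  have h := HasDerivAt.of_local_left_inverse
    (continuousAt_invFunOn hf.strictMonoOn_timeMap hf.surjOn_timeMap hf.theta_pos timeMap_self hz)
    (hasDerivAt_timeMap (continuous_Fint hf.smooth.continuous) hf.Fint_pos
      hf.intervalIntegrable_inv_sqrt_Fint hmem)
    (inv_ne_zero (Real.sqrt_pos.2 (hf.Fint_pos _ hmem)).ne')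
    (by filter_upwards [Iic_mem_nhds hz] with y hy
        exact hf.surjOn_timeMap.rightInvOn_invFunOn hy)
  rwa [inv_inv] at h

theorem hasDerivAt_sqrt_Fint_risingBranch (hf : CondF f α θ lam) {z : ℝ} (hz : z < 0) :
    HasDerivAt (fun y => √(Fint f (risingBranch f θ y))) (-f (risingBranch f θ z)) z := by
  have hF := hf.Fint_pos _ (hf.risingBranch_mem_Ioo hz)
  refine (((hasDerivAt_Fint hf.smooth.continuous _).comp z
    (hf.hasDerivAt_risingBranch hz)).sqrt hF.ne').congr_deriv ?_
  have : √(Fint f (risingBranch f θ z)) ≠ 0 := (Real.sqrt_pos.2 hF).ne'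
  rw [comp_apply]
  field_simp

theorem continuousAt_groundState_zero (hf : CondF f α θ lam) :
    ContinuousAt (groundState f θ) 0 := by
  have h := continuousWithinAt_invFunOn_zero hf.strictMonoOn_timeMap hf.surjOn_timeMap
    hf.theta_pos timeMap_self
  have habs : ContinuousWithinAt (fun z : ℝ => -|z|) univ 0 := by fun_prop
  rw [← continuousWithinAt_univ]
  exact h.comp_of_eq habs (fun z _ => neg_nonpos.2 (abs_nonneg z)) (by simp)

theorem groundState_zero (hf : CondF f α θ lam) : groundState f θ 0 = θ := by
  simpa [groundState, risingBranch] using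
    invFunOn_zero_eq hf.strictMonoOn_timeMap hf.theta_pos timeMap_self

theorem continuousAt_sign_mul_sqrt_Fint_zero (hf : CondF f α θ lam) :
    ContinuousAt (fun z => Real.sign (-z) * √(Fint f (groundState f θ z))) 0 := by
  have hsqrt : Tendsto (fun z => √(Fint f (groundState f θ z))) (𝓝 0) (𝓝 0) := by
    have := ((Real.continuous_sqrt.comp (continuous_Fint hf.smooth.continuous)).continuousAt.comp
      hf.continuousAt_groundState_zero).tendsto
    rwa [comp_apply, comp_apply, hf.groundState_zero, hf.F_theta, Real.sqrt_zero] at this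
  refine (squeeze_zero_norm (fun z => ?_) hsqrt).trans_eq (by simp)
  rw [norm_mul, Real.norm_of_nonneg (Real.sqrt_nonneg _)]
  refine mul_le_of_le_one_left (Real.sqrt_nonneg _) ?_
  rcases Real.sign_apply_eq (-z) with h | h | h <;> simp [h]

theorem hasDerivAt_groundState (hf : CondF f α θ lam) (z : ℝ) :
    HasDerivAt (groundState f θ) (Real.sign (-z) * √(Fint f (groundState f θ z))) z := by
  refine hasDerivAt_of_hasDerivAt_of_neg (ε := 1) (by simp [groundState_neg])
    (by simp [groundState_neg, Real.sign_neg]) (fun z hz => ?_) hf.continuousAt_groundState_zero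
    hf.continuousAt_sign_mul_sqrt_Fint_zero z
  have hV := groundState_eventuallyEq_risingBranch (f := f) (θ := θ) hz
  rw [Real.sign_of_pos (neg_pos.2 hz), one_mul, hV.eq_of_nhds]
  exact (hf.hasDerivAt_risingBranch hz).congr_of_eventuallyEq hV

theorem hasDerivAt_sign_mul_sqrt_Fint (hf : CondF f α θ lam) (z : ℝ) :
    HasDerivAt (fun z => Real.sign (-z) * √(Fint f (groundState f θ z)))
      (-f (groundState f θ z)) z := by
  refine hasDerivAt_of_hasDerivAt_of_neg (ε := -1) (u' := fun z => -f (groundState f θ z))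
    (by simp [groundState_neg, Real.sign_neg]) (by simp [groundState_neg]) (fun z hz => ?_)
    hf.continuousAt_sign_mul_sqrt_Fint_zero
    (hf.smooth.continuous.continuousAt.comp hf.continuousAt_groundState_zero).neg z
  have hV := groundState_eventuallyEq_risingBranch (f := f) (θ := θ) hz
  rw [hV.eq_of_nhds]
  refine (hf.hasDerivAt_sqrt_Fint_risingBranch hz).congr_of_eventuallyEq ?_
  filter_upwards [hV, Iio_mem_nhds hz] with y hy hy'
  rw [hy, Real.sign_of_pos (neg_pos.2 hy'), one_mul]

theorem isGroundState_groundState (hf : CondF f α θ lam) : IsGroundState f θ (groundState f θ) := by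
  have hderiv : deriv (groundState f θ) = fun z => Real.sign (-z) * √(Fint f (groundState f θ z)) :=
    funext fun z => (hf.hasDerivAt_groundState z).deriv
  have hcont : Continuous (groundState f θ) :=
    continuous_iff_continuousAt.2 fun z => (hf.hasDerivAt_groundState z).continuousAt
  have hbot : Tendsto (groundState f θ) atBot (𝓝 0) := by
    refine (tendsto_invFunOn_atBot hf.strictMonoOn_timeMap hf.surjOn_timeMap hf.theta_pos
      timeMap_self).congr' ?_
    filter_upwards [eventually_le_atBot 0] with z hz
    simp [groundState, risingBranch, abs_of_nonpos hz]
  refine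
    { contDiff := contDiff_two_of_hasDerivAt hf.hasDerivAt_groundState
        hf.hasDerivAt_sign_mul_sqrt_Fint (hf.smooth.continuous.comp hcont).neg
      pos := fun z => (hf.surjOn_timeMap.mapsTo_invFunOn (neg_nonpos.2 (abs_nonneg z))).1
      ode := fun z => by rw [hderiv, (hf.hasDerivAt_sign_mul_sqrt_Fint z).deriv]; ring
      apply_zero := hf.groundState_zero
      deriv_zero := by simp [hderiv]
      tendsto_atTop := ?_
      tendsto_atBot := hbot }
  simpa [comp_def, groundState_neg] using hbot.comp tendsto_neg_atTop_atBot

theorem strictAntiOn_groundState (hf : CondF f α θ lam) :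
    StrictAntiOn (groundState f θ) (Ici 0) := by
  intro z₁ hz₁ z₂ hz₂ hlt
  simp only [groundState, abs_of_nonneg (mem_Ici.1 hz₁), abs_of_nonneg (mem_Ici.1 hz₂)]
  exact hf.strictMonoOn_timeMap.strictMonoOn_invFunOn hf.surjOn_timeMap
    (neg_nonpos.2 (mem_Ici.1 hz₂)) (neg_nonpos.2 (mem_Ici.1 hz₁)) (neg_lt_neg hlt)

end CondF

theorem stmt0 (f : ℝ → ℝ) (α θ lam : ℝ) (hf : CondF f α θ lam) :
    ∃ V : ℝ → ℝ,
      (ContDiff ℝ 2 V ∧ (∀ z, 0 < V z) ∧ (∀ z, deriv (deriv V) z + f (V z) = 0) ∧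
        V 0 = θ ∧ deriv V 0 = 0 ∧
        Filter.Tendsto V Filter.atTop (nhds 0) ∧ Filter.Tendsto V Filter.atBot (nhds 0)) ∧
      (∀ W : ℝ → ℝ,
        (ContDiff ℝ 2 W ∧ (∀ z, 0 < W z) ∧ (∀ z, deriv (deriv W) z + f (W z) = 0) ∧
          W 0 = θ ∧ deriv W 0 = 0 ∧
          Filter.Tendsto W Filter.atTop (nhds 0) ∧ Filter.Tendsto W Filter.atBot (nhds 0)) →
        W = V) ∧
      (∀ z, V (-z) = V z) ∧ StrictAntiOn V (Set.Ici 0) ∧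
      (∀ z, (deriv V z) ^ 2 = Fint f (V z)) := by
  have hV := hf.isGroundState_groundState
  exact ⟨groundState f θ, isGroundState_iff.1 hV,
    fun W hW => (isGroundState_iff.2 hW).unique hf hV, groundState_neg,
    hf.strictAntiOn_groundState, hV.sq_deriv_eq hf⟩
end

section
/- For every z ∈ ℝ one has the implicit representation |z| = ∫_{V(z)}^θ ds/√(F(s)), and equivalently |z| = −(1/λ)·ln(V(z)/θ) + ∫_{V(z)}^θ (1/√(F(s)) − 1/(λ s)) ds, all the integrals involved being finite. -/
/-!
Separation of variables. For `x > 0` the first integral and `V' < 0` give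
`V' x = -√(F (V x))`, so the substitution `s = V x` (change of variables for the monotone map `V`
on `[0, |z|]`) turns `∫_{V z}^θ ds / √(F s)` into `∫_0^{|z|} dx = |z|`; the same formula shows that
the integrand is integrable despite the zero of `F` at `θ`. The second representation follows by
subtracting `∫_{V z}^θ ds / (λ s) = λ⁻¹ ln (θ / V z)`.
-/

open Set Filter MeasureTheory

structure IsGround (f : ℝ → ℝ) (θ : ℝ) (V : ℝ → ℝ) : Prop where
  smooth : ContDiff ℝ 2 V
  pos : ∀ z, 0 < V z
  ode : ∀ z, deriv (deriv V) z + f (V z) = 0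
  at_zero : V 0 = θ
  even : ∀ z, V (-z) = V z
  lim_top : Filter.Tendsto V Filter.atTop (nhds 0)
  lim_bot : Filter.Tendsto V Filter.atBot (nhds 0)
  first_int : ∀ z, (deriv V z) ^ 2 = Fint f (V z)
  dec : ∀ z > (0:ℝ), deriv V z < 0

namespace IsGround

variable {f V : ℝ → ℝ} {θ : ℝ}

lemma differentiable (hV : IsGround f θ V) : Differentiable ℝ V :=
  hV.smooth.differentiable (by norm_num)

lemma antitoneOn_Ici (hV : IsGround f θ V) : AntitoneOn V (Ici 0) :=
  antitoneOn_of_deriv_nonpos (convex_Ici 0) hV.differentiable.continuous.continuousOn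
    hV.differentiable.differentiableOn (fun x hx ↦ (hV.dec x (by simpa using hx)).le)

lemma apply_abs (hV : IsGround f θ V) (z : ℝ) : V |z| = V z := by
  rcases abs_choice z with h | h <;> rw [h]
  exact hV.even z

lemma apply_le (hV : IsGround f θ V) (z : ℝ) : V z ≤ θ := by
  rw [← hV.apply_abs, ← hV.at_zero]
  exact hV.antitoneOn_Ici self_mem_Ici (abs_nonneg z) (abs_nonneg z)

lemma deriv_mul_one_div_sqrt {x : ℝ} (hV : IsGround f θ V) (hx : 0 < x) :
    deriv V x * (1 / √(Fint f (V x))) = -1 := by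
  have hneg := hV.dec x hx
  rw [← hV.first_int, Real.sqrt_sq_eq_abs, abs_of_neg hneg]
  field_simp [hneg.ne]

lemma integrableOn_one_div_sqrt_and_integral {z : ℝ} (hV : IsGround f θ V) (hz : 0 ≤ z) :
    IntegrableOn (fun s ↦ 1 / √(Fint f s)) (Icc (V z) θ) ∧
      ∫ s in Icc (V z) θ, 1 / √(Fint f s) = z := by
  have hcont : ContinuousOn V (Icc 0 z) := hV.differentiable.continuous.continuousOn
  have hderiv : ∀ x ∈ Ioo 0 z, HasDerivAt V (deriv V x) x :=
    fun x _ ↦ (hV.differentiable x).hasDerivAt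
  have hnonpos : ∀ x ∈ Ioo 0 z, deriv V x ≤ 0 := fun x hx ↦ (hV.dec x hx.1).le
  have hsubst : EqOn (fun x ↦ deriv V x • (1 / √(Fint f (V x)))) (fun _ ↦ -1) (Ioc 0 z) :=
    fun x hx ↦ hV.deriv_mul_one_div_sqrt hx.1
  rw [← hV.at_zero]
  constructor
  · rw [← integrableOn_Icc_deriv_smul_iff_of_deriv_nonpos hcont hderiv hnonpos hz,
      integrableOn_Icc_iff_integrableOn_Ioc]
    exact (integrableOn_congr_fun hsubst measurableSet_Ioc).mpr (integrableOn_const (by simp))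
  · rw [← neg_neg (∫ _ in _, _),
      ← integral_Icc_deriv_smul_of_deriv_nonpos hcont hderiv hnonpos hz,
      integral_Icc_eq_integral_Ioc, setIntegral_congr_fun measurableSet_Ioc hsubst]
    simp [hz]

lemma intervalIntegrable_one_div_sqrt (hV : IsGround f θ V) (z : ℝ) :
    IntervalIntegrable (fun s ↦ 1 / √(Fint f s)) volume (V z) θ := by
  rw [← hV.apply_abs, intervalIntegrable_iff_integrableOn_Icc_of_le (hV.apply_le _)]
  exact (hV.integrableOn_one_div_sqrt_and_integral (abs_nonneg z)).1

lemma integral_one_div_sqrt (hV : IsGround f θ V) (z : ℝ) :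
    ∫ s in (V z)..θ, 1 / √(Fint f s) = |z| := by
  rw [← hV.apply_abs, intervalIntegral.integral_of_le (hV.apply_le _),
    ← integral_Icc_eq_integral_Ioc]
  exact (hV.integrableOn_one_div_sqrt_and_integral (abs_nonneg z)).2

end IsGround

lemma intervalIntegrable_one_div_const_mul {a b : ℝ} (c : ℝ) (ha : 0 < a) (hb : 0 < b) :
    IntervalIntegrable (fun s ↦ 1 / (c * s)) volume a b := by
  simp_rw [one_div, mul_inv]
  exact (intervalIntegrable_inv_iff.mpr (.inr (notMem_uIcc_of_lt ha hb))).const_mul _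

lemma integral_one_div_const_mul {a b : ℝ} (c : ℝ) (ha : 0 < a) (hb : 0 < b) :
    ∫ s in a..b, 1 / (c * s) = c⁻¹ * Real.log (b / a) := by
  simp_rw [one_div, mul_inv]
  rw [intervalIntegral.integral_const_mul, integral_inv_of_pos ha hb]

theorem stmt1_general (f V : ℝ → ℝ) (θ lam : ℝ)
    (hV : IsGround f θ V) :
    ∀ z : ℝ,
      IntervalIntegrable (fun s => 1 / Real.sqrt (Fint f s)) MeasureTheory.volume (V z) θ ∧
      IntervalIntegrable (fun s => 1 / Real.sqrt (Fint f s) - 1 / (lam * s))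
        MeasureTheory.volume (V z) θ ∧
      |z| = ∫ s in (V z)..θ, 1 / Real.sqrt (Fint f s) ∧
      |z| = -(1 / lam) * Real.log (V z / θ) +
        ∫ s in (V z)..θ, (1 / Real.sqrt (Fint f s) - 1 / (lam * s)) := by
  intro z
  have hVz : 0 < V z := hV.pos z
  have hθ : 0 < θ := hV.at_zero ▸ hV.pos 0
  have hsqrt := hV.intervalIntegrable_one_div_sqrt z
  have hrecip := intervalIntegrable_one_div_const_mul lam hVz hθ
  refine ⟨hsqrt, hsqrt.sub hrecip, (hV.integral_one_div_sqrt z).symm, ?_⟩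
  rw [intervalIntegral.integral_sub hsqrt hrecip, hV.integral_one_div_sqrt,
    integral_one_div_const_mul lam hVz hθ, ← inv_div (V z) θ, Real.log_inv]
  ring

theorem stmt1 (f V : ℝ → ℝ) (α θ lam : ℝ) (hf : CondF f α θ lam)
    (hV : IsGround f θ V) :
    ∀ z : ℝ,
      IntervalIntegrable (fun s => 1 / Real.sqrt (Fint f s)) MeasureTheory.volume (V z) θ ∧
      IntervalIntegrable (fun s => 1 / Real.sqrt (Fint f s) - 1 / (lam * s))
        MeasureTheory.volume (V z) θ ∧
      |z| = ∫ s in (V z)..θ, 1 / Real.sqrt (Fint f s) ∧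
      |z| = -(1 / lam) * Real.log (V z / θ) +
        ∫ s in (V z)..θ, (1 / Real.sqrt (Fint f s) - 1 / (lam * s)) :=
  stmt1_general f V θ lam hV
end

section
/- Let λ > 0, c > 0, ν > 0, C ≥ 0 and let y : [0,∞) → ℝ be a C¹ function with y(t) → ∞ as t → ∞ and |y'(t) − c·e^{−2λ·y(t)}| ≤ C·( e^{−3λ·y(t)} + e^{−2νt} ) for all t ≥ 0. Then there exist T > 0 and C' > 0 such that for all t ≥ T: | y(t) − (1/(2λ))·ln(2λ·c·t) | ≤ C'·t^{−1/2} and | y'(t) − 1/(2λ·t) | ≤ C'·t^{−3/2}. -/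
/-!
Substituting `u = exp (2 λ y)` linearises the equation: `u' = 2λ u y'` satisfies
`|u' - 2λc| ≤ 2λC (u^(-1/2) + u e^(-2νt))`. Since `y' → 0`, `y` grows sublinearly and the last
term is at most `e^(-νt)`; hence `u' → 2λc`, so `u ≥ λct` eventually, which makes the error
`O(t^(-1/2))`. Integrating gives `u = 2λct + O(√t)`; taking logarithms yields the estimate for `y`,
and `y' = u' / (2λu)` the one for `y'`.
-/

open Set Filter Real Asymptotics Topology

theorem sub_le_sub_of_hasDerivAt_le {f f' g g' : ℝ → ℝ} {a b : ℝ}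
    (hf : ∀ x ≥ a, HasDerivAt f (f' x) x) (hg : ∀ x ≥ a, HasDerivAt g (g' x) x)
    (h : ∀ x ≥ a, f' x ≤ g' x) (hab : a ≤ b) : f b - f a ≤ g b - g a := by
  have hmono : MonotoneOn (g - f) (Ici a) := by
    refine monotoneOn_of_hasDerivWithinAt_nonneg (f' := g' - f') (convex_Ici a)
      (fun x hx => ((hg x hx).sub (hf x hx)).continuousAt.continuousWithinAt) ?_ ?_
    · rw [interior_Ici]
      exact fun x hx => ((hg x hx.le).sub (hf x hx.le)).hasDerivWithinAt
    · rw [interior_Ici]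
      exact fun x hx => sub_nonneg.2 (h x hx.le)
  have := hmono self_mem_Ici hab hab
  simp only [Pi.sub_apply] at this
  linarith

theorem abs_sub_le_of_abs_hasDerivAt_le {f f' g g' : ℝ → ℝ} {a b : ℝ}
    (hf : ∀ x ≥ a, HasDerivAt f (f' x) x) (hg : ∀ x ≥ a, HasDerivAt g (g' x) x)
    (h : ∀ x ≥ a, |f' x| ≤ g' x) (hab : a ≤ b) : |f b - f a| ≤ g b - g a := by
  have hup := sub_le_sub_of_hasDerivAt_le hf hg (fun x hx => (le_abs_self _).trans (h x hx)) hab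
  have hdown := sub_le_sub_of_hasDerivAt_le (fun x hx => (hf x hx).neg) hg
    (fun x hx => (neg_le_abs _).trans (h x hx)) hab
  simp only [Pi.neg_apply] at hdown
  rw [abs_le]
  constructor <;> linarith

theorem eventually_le_mul_of_tendsto_deriv {f f' : ℝ → ℝ} {L δ : ℝ}
    (hf : ∀ᶠ t in atTop, HasDerivAt f (f' t) t) (hf' : Tendsto f' atTop (𝓝 L)) (hL : L < δ) :
    ∀ᶠ t in atTop, f t ≤ δ * t := by
  obtain ⟨ε, hLε, hεδ⟩ := exists_between hL
  obtain ⟨T, hT⟩ := eventually_atTop.1 (hf.and (hf'.eventually_le_const hLε))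
  have hlin : ∀ t ≥ T, f t - f T ≤ ε * t - ε * T :=
    fun t ht => sub_le_sub_of_hasDerivAt_le (fun x hx => (hT x hx).1)
      (fun x _ => hasDerivAt_const_mul ε) (fun x hx => (hT x hx).2) ht
  have hgap := (tendsto_id.const_mul_atTop (sub_pos.2 hεδ)).eventually_ge_atTop (f T - ε * T)
  filter_upwards [eventually_ge_atTop T, hgap] with t ht hgap
  have := hlin t ht
  simp only [id] at hgap
  linarith

theorem eventually_mul_le_of_tendsto_deriv {f f' : ℝ → ℝ} {L δ : ℝ}
    (hf : ∀ᶠ t in atTop, HasDerivAt f (f' t) t) (hf' : Tendsto f' atTop (𝓝 L)) (hL : δ < L) :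
    ∀ᶠ t in atTop, δ * t ≤ f t := by
  have := eventually_le_mul_of_tendsto_deriv (hf.mono fun t ht => ht.neg) hf'.neg (neg_lt_neg hL)
  filter_upwards [this] with t ht
  simp only [Pi.neg_apply] at ht
  linarith

theorem isBigO_of_hasDerivAt_isBigO {f f' g g' : ℝ → ℝ}
    (hf : ∀ᶠ t in atTop, HasDerivAt f (f' t) t) (hg : ∀ᶠ t in atTop, HasDerivAt g (g' t) t)
    (hg' : ∀ᶠ t in atTop, 0 ≤ g' t) (hg_top : Tendsto g atTop atTop) (h : f' =O[atTop] g') :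
    f =O[atTop] g := by
  obtain ⟨K, hK, hKb⟩ := h.exists_pos
  obtain ⟨T, hT⟩ := eventually_atTop.1 (hf.and (hg.and (hg'.and hKb.bound)))
  have hcmp : ∀ t ≥ T, |f t - f T| ≤ K * g t - K * g T := by
    refine fun t ht => abs_sub_le_of_abs_hasDerivAt_le (fun x hx => (hT x hx).1)
      (fun x hx => (hT x hx).2.1.const_mul K) (fun x hx => ?_) ht
    obtain ⟨-, -, hnn, hb⟩ := hT x hx
    simpa [Real.norm_eq_abs, abs_of_nonneg hnn] using hb
  refine IsBigO.of_bound (K + 1) ?_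
  filter_upwards [eventually_ge_atTop T, hg_top.eventually_ge_atTop (|f T| + K * |g T|)]
    with t ht hgt
  have h1 := hcmp t ht
  have h2 : -(K * g T) ≤ K * |g T| := by nlinarith [neg_abs_le (g T)]
  have h3 : g t ≤ |g t| := le_abs_self (g t)
  rw [Real.norm_eq_abs, Real.norm_eq_abs]
  nlinarith [abs_sub_abs_le_abs_sub (f t) (f T)]

theorem tendsto_exp_mul_nhds_zero {a : ℝ} (ha : a < 0) {f : ℝ → ℝ} (hf : Tendsto f atTop atTop) :
    Tendsto (fun t => exp (a * f t)) atTop (𝓝 0) :=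
  tendsto_exp_atBot.comp (hf.const_mul_atTop_of_neg ha)

theorem log_sub_log_le_abs_div {x z m : ℝ} (hm : 0 < m) (hx : 0 < x) (hz : m ≤ z) :
    log x - log z ≤ |x - z| / m := by
  have hz0 : 0 < z := hm.trans_le hz
  calc log x - log z = log (x / z) := (log_div hx.ne' hz0.ne').symm
    _ ≤ x / z - 1 := log_le_sub_one_of_pos (div_pos hx hz0)
    _ = (x - z) / z := by field_simp
    _ ≤ |x - z| / z := div_le_div_of_nonneg_right (le_abs_self _) hz0.le
    _ ≤ |x - z| / m := div_le_div_of_nonneg_left (abs_nonneg _) hm hz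

theorem abs_log_sub_log_le {x z m : ℝ} (hm : 0 < m) (hx : m ≤ x) (hz : m ≤ z) :
    |log x - log z| ≤ |x - z| / m := by
  have h₁ := log_sub_log_le_abs_div hm (hm.trans_le hx) hz
  have h₂ := log_sub_log_le_abs_div hm (hm.trans_le hz) hx
  rw [abs_sub_comm z] at h₂
  exact abs_le.2 ⟨by linarith, h₁⟩

theorem Asymptotics.IsBigO.mul_rpow {f : ℝ → ℝ} {a b c : ℝ} (h : f =O[atTop] fun t => t ^ a)
    (habc : a + b = c) : (fun t => f t * t ^ b) =O[atTop] fun t => t ^ c :=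
  (h.mul (isBigO_refl _ _)).congr' EventuallyEq.rfl <|
    (eventually_gt_atTop 0).mono fun t ht => by simp only [← habc, rpow_add ht]

theorem exists_pos_forall_abs_le_of_isBigO {f₁ f₂ g₁ g₂ : ℝ → ℝ}
    (h₁ : f₁ =O[atTop] g₁) (h₂ : f₂ =O[atTop] g₂)
    (hg₁ : ∀ᶠ t in atTop, 0 ≤ g₁ t) (hg₂ : ∀ᶠ t in atTop, 0 ≤ g₂ t) :
    ∃ T > (0:ℝ), ∃ K > (0:ℝ), ∀ t ≥ T, |f₁ t| ≤ K * g₁ t ∧ |f₂ t| ≤ K * g₂ t := by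
  obtain ⟨K₁, hK₁, hb₁⟩ := h₁.exists_pos
  obtain ⟨K₂, hK₂, hb₂⟩ := h₂.exists_pos
  obtain ⟨T, hT⟩ := eventually_atTop.1 (hb₁.bound.and (hb₂.bound.and (hg₁.and hg₂)))
  refine ⟨max T 1, by positivity, max K₁ K₂, by positivity, fun t ht => ?_⟩
  obtain ⟨h₁t, h₂t, hg₁t, hg₂t⟩ := hT t ((le_max_left _ _).trans ht)
  rw [Real.norm_eq_abs, Real.norm_eq_abs, abs_of_nonneg hg₁t] at h₁t
  rw [Real.norm_eq_abs, Real.norm_eq_abs, abs_of_nonneg hg₂t] at h₂t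
  exact ⟨h₁t.trans (by gcongr; exact le_max_left _ _),
    h₂t.trans (by gcongr; exact le_max_right _ _)⟩

section

variable {lam c ν C : ℝ} {y : ℝ → ℝ}

theorem abs_exp_mul_sub_le {Y D t : ℝ} (hlam : 0 ≤ lam) (hC : 0 ≤ C)
    (hY : 2 * lam * Y ≤ ν * t)
    (h : |D - c * exp (-2 * lam * Y)| ≤ C * (exp (-3 * lam * Y) + exp (-2 * ν * t))) :
    |exp (2 * lam * Y) * (2 * lam * D) - 2 * lam * c| ≤
      2 * lam * C * (exp (-lam * Y) + exp (-ν * t)) := by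
  have hinv : exp (2 * lam * Y) * exp (-2 * lam * Y) = 1 := by
    rw [← exp_add]; ring_nf; exact exp_zero
  have hfactor : exp (2 * lam * Y) * (2 * lam * D) - 2 * lam * c =
      2 * lam * exp (2 * lam * Y) * (D - c * exp (-2 * lam * Y)) := by
    linear_combination 2 * lam * c * hinv
  have hdecay : exp (2 * lam * Y) * (exp (-3 * lam * Y) + exp (-2 * ν * t)) ≤
      exp (-lam * Y) + exp (-ν * t) := by
    rw [mul_add, ← exp_add, ← exp_add]
    gcongr
    · exact le_of_eq (by ring_nf)
    · linarith
  calc |exp (2 * lam * Y) * (2 * lam * D) - 2 * lam * c|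
      = 2 * lam * exp (2 * lam * Y) * |D - c * exp (-2 * lam * Y)| := by
        rw [hfactor, abs_mul, abs_of_nonneg (by positivity)]
    _ ≤ 2 * lam * exp (2 * lam * Y) * (C * (exp (-3 * lam * Y) + exp (-2 * ν * t))) := by
        gcongr
    _ = 2 * lam * C * (exp (2 * lam * Y) * (exp (-3 * lam * Y) + exp (-2 * ν * t))) := by ring
    _ ≤ 2 * lam * C * (exp (-lam * Y) + exp (-ν * t)) := by gcongr

theorem abs_sub_log_le {Y t : ℝ} (hlam : 0 < lam) (hc : 0 < c) (ht : 0 < t)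
    (hY : lam * c * t ≤ exp (2 * lam * Y)) :
    |Y - 1 / (2 * lam) * log (2 * lam * c * t)| ≤
      |exp (2 * lam * Y) - 2 * lam * c * t| / (2 * lam ^ 2 * c * t) := by
  calc |Y - 1 / (2 * lam) * log (2 * lam * c * t)|
      = 1 / (2 * lam) * |log (exp (2 * lam * Y)) - log (2 * lam * c * t)| := by
        rw [log_exp, ← abs_of_pos (show 0 < 1 / (2 * lam) by positivity), ← abs_mul,
          abs_of_pos (show 0 < 1 / (2 * lam) by positivity)]
        congr 1
        field_simp
    _ ≤ 1 / (2 * lam) * (|exp (2 * lam * Y) - 2 * lam * c * t| / (lam * c * t)) := by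
        gcongr
        exact abs_log_sub_log_le (by positivity) hY (by nlinarith [mul_pos (mul_pos hlam hc) ht])
    _ = |exp (2 * lam * Y) - 2 * lam * c * t| / (2 * lam ^ 2 * c * t) := by
        field_simp

theorem abs_sub_one_div_le {Y D t : ℝ} (hlam : 0 < lam) (hc : 0 < c) (ht : 0 < t)
    (hY : lam * c * t ≤ exp (2 * lam * Y)) :
    |D - 1 / (2 * lam * t)| ≤
      |(exp (2 * lam * Y) * (2 * lam * D) - 2 * lam * c) * t - (exp (2 * lam * Y) - 2 * lam * c * t)|
        / (2 * lam ^ 2 * c * t ^ 2) := by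
  have hform : D - 1 / (2 * lam * t) =
      ((exp (2 * lam * Y) * (2 * lam * D) - 2 * lam * c) * t - (exp (2 * lam * Y) - 2 * lam * c * t))
        / (2 * lam * exp (2 * lam * Y) * t) := by
    field_simp
    ring
  rw [hform, abs_div, abs_of_pos (show 0 < 2 * lam * exp (2 * lam * Y) * t by positivity)]
  refine div_le_div_of_nonneg_left (abs_nonneg _) (by positivity) ?_
  calc 2 * lam ^ 2 * c * t ^ 2 = 2 * lam * (lam * c * t) * t := by ring
    _ ≤ 2 * lam * exp (2 * lam * Y) * t := by gcongr

theorem tendsto_deriv_atTop_nhds_zero (hlam : 0 < lam) (hν : 0 < ν)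
    (hlim : Tendsto y atTop atTop)
    (hode : ∀ t ≥ (0:ℝ), |deriv y t - c * exp (-2 * lam * y t)| ≤
      C * (exp (-3 * lam * y t) + exp (-2 * ν * t))) :
    Tendsto (deriv y) atTop (𝓝 0) := by
  have hbound : Tendsto (fun t => |c| * exp (-2 * lam * y t) +
      C * (exp (-3 * lam * y t) + exp (-2 * ν * t))) atTop (𝓝 0) := by
    simpa using ((tendsto_exp_mul_nhds_zero (a := -2 * lam) (by linarith) hlim).const_mul |c|).add
      (((tendsto_exp_mul_nhds_zero (a := -3 * lam) (by linarith) hlim).add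
        (tendsto_exp_mul_nhds_zero (a := -2 * ν) (by linarith) tendsto_id)).const_mul C)
  refine squeeze_zero_norm' ?_ hbound
  filter_upwards [eventually_ge_atTop 0] with t ht
  have := abs_sub_abs_le_abs_sub (deriv y t) (c * exp (-2 * lam * y t))
  rw [abs_mul, abs_of_pos (exp_pos _)] at this
  rw [Real.norm_eq_abs]
  linarith [hode t ht]

theorem eventually_abs_deriv_exp_sub_le (hlam : 0 < lam) (hν : 0 < ν) (hC : 0 ≤ C)
    (hyd : ∀ t > 0, HasDerivAt y (deriv y t) t) (hlim : Tendsto y atTop atTop)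
    (hode : ∀ t ≥ (0:ℝ), |deriv y t - c * exp (-2 * lam * y t)| ≤
      C * (exp (-3 * lam * y t) + exp (-2 * ν * t))) :
    ∀ᶠ t in atTop, |exp (2 * lam * y t) * (2 * lam * deriv y t) - 2 * lam * c| ≤
      2 * lam * C * (exp (-lam * y t) + exp (-ν * t)) := by
  have hsublin : ∀ᶠ t in atTop, 2 * lam * y t ≤ ν * t :=
    eventually_le_mul_of_tendsto_deriv
      ((eventually_gt_atTop 0).mono fun t ht => (hyd t ht).const_mul (2 * lam))
      (by simpa using (tendsto_deriv_atTop_nhds_zero hlam hν hlim hode).const_mul (2 * lam)) hν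
  filter_upwards [hsublin, eventually_ge_atTop 0] with t hsub ht
  exact abs_exp_mul_sub_le hlam.le hC hsub (hode t ht)

theorem eventually_mul_le_exp (hlam : 0 < lam) (hc : 0 < c) (hν : 0 < ν)
    (hyd : ∀ t > 0, HasDerivAt y (deriv y t) t) (hlim : Tendsto y atTop atTop)
    (hbound : ∀ᶠ t in atTop, |exp (2 * lam * y t) * (2 * lam * deriv y t) - 2 * lam * c| ≤
      2 * lam * C * (exp (-lam * y t) + exp (-ν * t))) :
    ∀ᶠ t in atTop, lam * c * t ≤ exp (2 * lam * y t) := by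
  have hu' : Tendsto (fun t => exp (2 * lam * y t) * (2 * lam * deriv y t)) atTop
      (𝓝 (2 * lam * c)) := by
    rw [← tendsto_sub_nhds_zero_iff]
    refine squeeze_zero_norm' hbound ?_
    simpa using ((tendsto_exp_mul_nhds_zero (a := -lam) (by linarith) hlim).add
      (tendsto_exp_mul_nhds_zero (a := -ν) (by linarith) tendsto_id)).const_mul (2 * lam * C)
  exact eventually_mul_le_of_tendsto_deriv
    ((eventually_gt_atTop 0).mono fun t ht => ((hyd t ht).const_mul (2 * lam)).exp) hu'
    (by nlinarith [mul_pos hlam hc])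

theorem isBigO_deriv_exp_sub (hlam : 0 < lam) (hc : 0 < c) (hν : 0 < ν)
    (hbound : ∀ᶠ t in atTop, |exp (2 * lam * y t) * (2 * lam * deriv y t) - 2 * lam * c| ≤
      2 * lam * C * (exp (-lam * y t) + exp (-ν * t)))
    (hlow : ∀ᶠ t in atTop, lam * c * t ≤ exp (2 * lam * y t)) :
    (fun t => exp (2 * lam * y t) * (2 * lam * deriv y t) - 2 * lam * c) =O[atTop]
      fun t => t ^ (-(1:ℝ) / 2) := by
  have hexp : (fun t => exp (-lam * y t)) =O[atTop] fun t => t ^ (-(1:ℝ) / 2) := by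
    refine IsBigO.of_bound ((lam * c) ^ (-(1:ℝ) / 2)) ?_
    filter_upwards [hlow, eventually_gt_atTop 0] with t hl ht
    rw [norm_of_nonneg (exp_pos _).le, norm_of_nonneg (rpow_nonneg ht.le _),
      ← mul_rpow (by positivity) ht.le]
    calc exp (-lam * y t) = exp (2 * lam * y t) ^ (-(1:ℝ) / 2) := by rw [← exp_mul]; ring_nf
      _ ≤ (lam * c * t) ^ (-(1:ℝ) / 2) := rpow_le_rpow_of_nonpos (by positivity) hl (by norm_num)
  refine (IsBigO.of_bound' ?_).trans
    ((hexp.add (isLittleO_exp_neg_mul_rpow_atTop hν _).isBigO).const_mul_left (2 * lam * C))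
  filter_upwards [hbound] with t ht
  rw [Real.norm_eq_abs, Real.norm_eq_abs]
  exact ht.trans (le_abs_self _)

theorem isBigO_exp_sub_mul (hyd : ∀ t > 0, HasDerivAt y (deriv y t) t)
    (hderiv : (fun t => exp (2 * lam * y t) * (2 * lam * deriv y t) - 2 * lam * c) =O[atTop]
      fun t => t ^ (-(1:ℝ) / 2)) :
    (fun t => exp (2 * lam * y t) - 2 * lam * c * t) =O[atTop] fun t => t ^ ((1:ℝ) / 2) := by
  have hexponent : (1:ℝ) / 2 - 1 = -(1:ℝ) / 2 := by norm_num
  refine isBigO_of_hasDerivAt_isBigO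
    ((eventually_gt_atTop 0).mono fun t ht =>
      ((hyd t ht).const_mul (2 * lam)).exp.sub (hasDerivAt_const_mul (2 * lam * c)))
    ((eventually_gt_atTop 0).mono fun t ht => hasDerivAt_rpow_const (Or.inl ht.ne'))
    ((eventually_gt_atTop 0).mono fun t ht => by positivity)
    (tendsto_rpow_atTop (by norm_num)) ?_
  rw [hexponent]
  exact hderiv.trans (isBigO_self_const_mul (by norm_num) _ _)

theorem isBigO_sub_log (hlam : 0 < lam) (hc : 0 < c)
    (hlow : ∀ᶠ t in atTop, lam * c * t ≤ exp (2 * lam * y t))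
    (hu : (fun t => exp (2 * lam * y t) - 2 * lam * c * t) =O[atTop] fun t => t ^ ((1:ℝ) / 2)) :
    (fun t => y t - 1 / (2 * lam) * log (2 * lam * c * t)) =O[atTop]
      fun t => t ^ (-(1:ℝ) / 2) := by
  refine (IsBigO.of_bound (1 / (2 * lam ^ 2 * c)) ?_).trans (hu.mul_rpow (b := -1) (by norm_num))
  filter_upwards [hlow, eventually_gt_atTop 0] with t hl ht
  rw [Real.norm_eq_abs, norm_mul, Real.norm_eq_abs, norm_of_nonneg (rpow_nonneg ht.le _),
    rpow_neg_one]
  calc _ ≤ _ := abs_sub_log_le hlam hc ht hl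
    _ = _ := by field_simp

theorem isBigO_deriv_sub_one_div (hlam : 0 < lam) (hc : 0 < c)
    (hlow : ∀ᶠ t in atTop, lam * c * t ≤ exp (2 * lam * y t))
    (hderiv : (fun t => exp (2 * lam * y t) * (2 * lam * deriv y t) - 2 * lam * c) =O[atTop]
      fun t => t ^ (-(1:ℝ) / 2))
    (hu : (fun t => exp (2 * lam * y t) - 2 * lam * c * t) =O[atTop] fun t => t ^ ((1:ℝ) / 2)) :
    (fun t => deriv y t - 1 / (2 * lam * t)) =O[atTop] fun t => t ^ (-(3:ℝ) / 2) := by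
  have hnum : (fun t => (exp (2 * lam * y t) * (2 * lam * deriv y t) - 2 * lam * c) * t -
      (exp (2 * lam * y t) - 2 * lam * c * t)) =O[atTop] fun t => t ^ ((1:ℝ) / 2) :=
    IsBigO.sub (by simpa only [rpow_one] using hderiv.mul_rpow (b := 1) (by norm_num)) hu
  refine (IsBigO.of_bound (1 / (2 * lam ^ 2 * c)) ?_).trans (hnum.mul_rpow (b := -2) (by norm_num))
  filter_upwards [hlow, eventually_gt_atTop 0] with t hl ht
  rw [Real.norm_eq_abs, norm_mul, Real.norm_eq_abs, norm_of_nonneg (rpow_nonneg ht.le _),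
    rpow_neg ht.le, rpow_two]
  calc _ ≤ _ := abs_sub_one_div_le hlam hc ht hl
    _ = _ := by field_simp

end

theorem stmt19 (lam c ν C : ℝ) (hlam : 0 < lam) (hc : 0 < c) (hν : 0 < ν) (hC : 0 ≤ C)
    (y : ℝ → ℝ) (hy : ContDiffOn ℝ 1 y (Set.Ici 0))
    (hlim : Filter.Tendsto y Filter.atTop Filter.atTop)
    (hode : ∀ t ≥ (0:ℝ), |deriv y t - c * Real.exp (-2 * lam * y t)| ≤
      C * (Real.exp (-3 * lam * y t) + Real.exp (-2 * ν * t))) :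
    ∃ T > (0:ℝ), ∃ C' > (0:ℝ), ∀ t ≥ T,
      |y t - (1 / (2 * lam)) * Real.log (2 * lam * c * t)| ≤ C' * t ^ (-(1:ℝ) / 2) ∧
      |deriv y t - 1 / (2 * lam * t)| ≤ C' * t ^ (-(3:ℝ) / 2) := by
  have hyd : ∀ t > 0, HasDerivAt y (deriv y t) t := fun t ht =>
    ((hy.contDiffAt (Ici_mem_nhds ht)).differentiableAt one_ne_zero).hasDerivAt
  have hbound := eventually_abs_deriv_exp_sub_le hlam hν hC hyd hlim hode
  have hlow := eventually_mul_le_exp hlam hc hν hyd hlim hbound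
  have hderiv := isBigO_deriv_exp_sub hlam hc hν hbound hlow
  have hu := isBigO_exp_sub_mul hyd hderiv
  exact exists_pos_forall_abs_le_of_isBigO (isBigO_sub_log hlam hc hlow hu)
    (isBigO_deriv_sub_one_div hlam hc hlow hderiv hu)
    ((eventually_ge_atTop 0).mono fun t ht => rpow_nonneg ht _)
    ((eventually_ge_atTop 0).mono fun t ht => rpow_nonneg ht _)
end
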